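/- Let (X,‖·‖) be a real Banach space and let S, with domain D(S) ⊆ X, generate a bounded analytic semigroup (T(t))_{t≥0} with constants M, C₀ as in the context, and let s ∈ (0,2) and T₀ ∈ (0,∞]. Then there exists a constant C = C(s,M,C₀) such that for every strongly measurable f : (0,T₀) → X with f(τ) ∈ D(S) for a.e. τ and ∫₀^{T₀} ‖f(τ)‖_{Ḃˢ} dτ < ∞, one has (a) ∫₀^{T₀} ∫₀^{t} ‖S(T(t−τ)f(τ))‖_{Ḃˢ} dτ dt ≤ C ∫₀^{T₀} ‖f(τ)‖_{Ḃˢ} dτ, and (b) for every t ∈ (0,T₀): ∫₀^{t} ‖T(t−τ)f(τ)‖_{Ḃˢ} dτ ≤ C ∫₀^{T₀} ‖f(τ)‖_{Ḃˢ} dτ. -/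

import Mathlib

open MeasureTheory
open scoped ENNReal NNReal

noncomputable section

variable {X : Type*} [NormedAddCommGroup X] [NormedSpace ℝ X] [CompleteSpace X]

/-- `S`, a linear operator defined on the subspace `D ⊆ X`, generates the bounded
analytic semigroup `(T(t))_{t≥0}` with constants `M, C₀`. -/
structure IsBAS (D : Set X) (S : X → X) (T : ℝ → X →L[ℝ] X) (M C₀ : ℝ) : Prop where
  zero_mem : (0 : X) ∈ D
  add_mem : ∀ x ∈ D, ∀ y ∈ D, x + y ∈ D
  smul_mem : ∀ (c : ℝ), ∀ x ∈ D, c • x ∈ D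
  map_add : ∀ x ∈ D, ∀ y ∈ D, S (x + y) = S x + S y
  map_smul : ∀ (c : ℝ), ∀ x ∈ D, S (c • x) = c • S x
  T_zero : T 0 = ContinuousLinearMap.id ℝ X
  T_semigroup : ∀ t : ℝ, 0 ≤ t → ∀ s : ℝ, 0 ≤ s → T (t + s) = (T t).comp (T s)
  T_cont : ∀ x : X, ContinuousOn (fun t : ℝ => T t x) (Set.Ici 0)
  T_bdd : ∀ t : ℝ, 0 ≤ t → ∀ x : X, ‖T t x‖ ≤ M * ‖x‖
  T_mem : ∀ x ∈ D, ∀ t : ℝ, 0 ≤ t → T t x ∈ D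
  T_comm : ∀ x ∈ D, ∀ t : ℝ, 0 ≤ t → S (T t x) = T t (S x)
  T_deriv : ∀ x ∈ D, ∀ t : ℝ, 0 ≤ t →
    HasDerivWithinAt (fun τ : ℝ => T τ x) (T t (S x)) (Set.Ici 0) t
  analytic_mem : ∀ x : X, ∀ t : ℝ, 0 < t → T t x ∈ D
  analytic_bdd : ∀ x : X, ∀ t : ℝ, 0 < t → t * ‖S (T t x)‖ ≤ C₀ * ‖x‖

/-- The (extended-real-valued) seminorm `‖x‖_{Ḃˢ} = ∫₀^∞ t^{−s/2}‖S(T(t)x)‖ dt`. -/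
def BsNorm (S : X → X) (T : ℝ → X →L[ℝ] X) (s : ℝ) (x : X) : ℝ≥0∞ :=
  ∫⁻ t in Set.Ioi (0 : ℝ), ENNReal.ofReal (t ^ (-s / 2) * ‖S (T t x)‖)

/-- The (extended-real-valued) seminorm `‖x‖_{Ḃ⁻ˢ} = ∫₀^∞ t^{s/2−1}‖T(t)x‖ dt`. -/
def BnegNorm (T : ℝ → X →L[ℝ] X) (s : ℝ) (x : X) : ℝ≥0∞ :=
  ∫⁻ t in Set.Ioi (0 : ℝ), ENNReal.ofReal (t ^ (s / 2 - 1) * ‖T t x‖)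

/-! For `y ∈ D(S)` and `u = (r + σ)/2`, analyticity gives
`‖S T(r) S T(σ) y‖ = ‖S T(u) S T(u) y‖ ≤ C₀ ‖S T(u) y‖ / u`. Integrating against `r^{-s/2} dr` and
then in `σ`, the change of variables `(r, σ) ↦ (r, u)` bounds `∫₀^∞ ‖S T(σ) y‖_{Ḃˢ} dσ` by
`2 C₀ ∫₀^∞ (∫₀^{2u} r^{-s/2} dr) ‖S T(u) y‖ / u du`, and `∫₀^{2u} r^{-s/2} dr` is a multiple of
`u^{1-s/2}` because `s < 2`; the result is a multiple of `‖y‖_{Ḃˢ}`. Tonelli on the triangle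
`0 < τ < t` then gives (a). Part (b) only needs `‖T(σ) x‖_{Ḃˢ} ≤ M ‖x‖_{Ḃˢ}`, as `T(σ)` commutes
with `S T(r)`. -/

open Set Function

theorem setLIntegral_Ioi_comp_affine {a : ℝ} (ha : 0 < a) (b c : ℝ) (G : ℝ → ℝ≥0∞) :
    ∫⁻ x in Ioi b, ENNReal.ofReal a * G (a * x + c) = ∫⁻ y in Ioi (a * b + c), G y := by
  have himage : (fun x => a * x + c) '' Ioi b = Ioi (a * b + c) := by
    rw [← image_add_const_Ioi, ← image_mul_left_Ioi ha, image_image]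
  rw [← himage, lintegral_image_eq_lintegral_abs_deriv_mul (f := fun x => a * x + c)
    measurableSet_Ioi (fun x _ => (((hasDerivAt_id' x).const_mul a).add_const c).hasDerivWithinAt)
    (fun x _ y _ h => by simpa [ha.ne'] using h), mul_one, abs_of_pos ha]

theorem setLIntegral_Ioi_comp_sub (c : ℝ) (G : ℝ → ℝ≥0∞) :
    ∫⁻ t in Ioi c, G (t - c) = ∫⁻ σ in Ioi 0, G σ := by
  simpa [sub_eq_add_neg] using setLIntegral_Ioi_comp_affine one_pos c (-c) G

theorem setLIntegral_Ioi_comp_add_div_two (r : ℝ) (G : ℝ → ℝ≥0∞) :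
    ∫⁻ σ in Ioi 0, G ((r + σ) / 2) = 2 * ∫⁻ u in Ioi (r / 2), G u := by
  have h := setLIntegral_Ioi_comp_affine (a := 2⁻¹) (by norm_num) 0 (r / 2) G
  rw [lintegral_const_mul' _ _ ENNReal.ofReal_ne_top, mul_zero, zero_add] at h
  rw [← h, ← mul_assoc, ENNReal.ofReal_inv_of_pos two_pos, ENNReal.ofReal_ofNat,
    ENNReal.mul_inv_cancel two_ne_zero ENNReal.ofNat_ne_top, one_mul]
  congr with σ
  ring_nf

theorem setLIntegral_Ioo_rpow {a : ℝ} (ha : -1 < a) {w : ℝ} (hw : 0 < w) :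
    ∫⁻ r in Ioo 0 w, ENNReal.ofReal (r ^ a) = ENNReal.ofReal (w ^ (a + 1) / (a + 1)) := by
  have hint : IntegrableOn (fun r : ℝ => r ^ a) (Ioc 0 w) :=
    (intervalIntegrable_iff_integrableOn_Ioc_of_le hw.le).1
      (intervalIntegral.intervalIntegrable_rpow' ha)
  rw [Measure.restrict_congr_set Ioo_ae_eq_Ioc, ← ofReal_integral_eq_lintegral_ofReal hint
    ((ae_restrict_mem measurableSet_Ioc).mono fun r hr => Real.rpow_nonneg hr.1.le a),
    ← intervalIntegral.integral_of_le hw.le, integral_rpow (Or.inl ha),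
    Real.zero_rpow (by linarith), sub_zero]

theorem setLIntegral_Ioi_Ioi_comp_add_div_two {F : ℝ → ℝ → ℝ≥0∞} (hF : Measurable (uncurry F)) :
    ∫⁻ σ in Ioi 0, ∫⁻ r in Ioi 0, F r ((r + σ) / 2)
      = 2 * ∫⁻ u in Ioi 0, ∫⁻ r in Ioo 0 (2 * u), F r u := by
  have hF_avg : Measurable fun p : ℝ × ℝ => F p.2 ((p.2 + p.1) / 2) :=
    hF.comp (measurable_snd.prodMk ((measurable_snd.add measurable_fst).div_const 2))
  have hF_ind : Measurable fun p : ℝ × ℝ => (Ioi (p.1 / 2)).indicator (F p.1) p.2 :=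
    hF.indicator (measurableSet_lt (measurable_fst.div_const 2) measurable_snd)
  calc ∫⁻ σ in Ioi 0, ∫⁻ r in Ioi 0, F r ((r + σ) / 2)
      = ∫⁻ r in Ioi 0, ∫⁻ σ in Ioi 0, F r ((r + σ) / 2) :=
        lintegral_lintegral_swap hF_avg.aemeasurable
    _ = ∫⁻ r in Ioi 0, 2 * ∫⁻ u in Ioi 0, (Ioi (r / 2)).indicator (F r) u := by
        refine setLIntegral_congr_fun measurableSet_Ioi fun r hr => ?_
        rw [setLIntegral_Ioi_comp_add_div_two, lintegral_indicator measurableSet_Ioi,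
          Measure.restrict_restrict measurableSet_Ioi,
          inter_eq_left.mpr (Ioi_subset_Ioi (by linarith [mem_Ioi.mp hr]))]
    _ = 2 * ∫⁻ u in Ioi 0, ∫⁻ r in Ioi 0, (Ioi (r / 2)).indicator (F r) u := by
        rw [lintegral_const_mul _ hF_ind.lintegral_prod_right',
          lintegral_lintegral_swap hF_ind.aemeasurable]
    _ = 2 * ∫⁻ u in Ioi 0, ∫⁻ r in Ioo 0 (2 * u), F r u := by
        congr 1
        refine lintegral_congr fun u => ?_
        have h : ∀ r, (Ioi (r / 2)).indicator (F r) u = (Iio (2 * u)).indicator (F · u) r := by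
          intro r
          have hiff : r / 2 < u ↔ r < 2 * u := by constructor <;> intro <;> linarith
          simp only [indicator, mem_Ioi, mem_Iio, hiff]
        simp_rw [h]
        rw [lintegral_indicator measurableSet_Iio, Measure.restrict_restrict measurableSet_Iio,
          Iio_inter_Ioi]

theorem setLIntegral_lintegral_Ioo_sub_le {A : Set ℝ} (hA : MeasurableSet A)
    (hsub : ∀ t ∈ A, Ioo 0 t ⊆ A) {K : ℝ → ℝ → ℝ≥0∞} (hK : Measurable (uncurry K)) :
    ∫⁻ t in A, ∫⁻ τ in Ioo 0 t, K (t - τ) τ ≤ ∫⁻ τ in A, ∫⁻ σ in Ioi 0, K σ τ := by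
  have hK_ind : Measurable fun p : ℝ × ℝ => (Ioo 0 p.1).indicator (fun τ => K (p.1 - τ) τ) p.2 :=
    (hK.comp ((measurable_fst.sub measurable_snd).prodMk measurable_snd)).indicator
      ((measurableSet_lt measurable_const measurable_snd).inter
        (measurableSet_lt measurable_snd measurable_fst))
  calc ∫⁻ t in A, ∫⁻ τ in Ioo 0 t, K (t - τ) τ
      = ∫⁻ t in A, ∫⁻ τ in A, (Ioo 0 t).indicator (fun τ => K (t - τ) τ) τ := by
        refine setLIntegral_congr_fun hA fun t ht => ?_
        rw [lintegral_indicator measurableSet_Ioo, Measure.restrict_restrict measurableSet_Ioo,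
          inter_eq_left.mpr (hsub t ht)]
    _ = ∫⁻ τ in A, ∫⁻ t in A, (Ioo 0 t).indicator (fun τ => K (t - τ) τ) τ :=
        lintegral_lintegral_swap hK_ind.aemeasurable
    _ ≤ ∫⁻ τ in A, ∫⁻ t, (Ioi τ).indicator (fun t => K (t - τ) τ) t := by
        refine lintegral_mono fun τ => lintegral_mono' Measure.restrict_le_self fun t => ?_
        exact indicator_apply_le'
          (fun h => (indicator_of_mem (f := fun t => K (t - τ) τ) (mem_Ioi.mpr h.2)).ge)
          (fun _ => zero_le)
    _ = ∫⁻ τ in A, ∫⁻ σ in Ioi 0, K σ τ := by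
        refine lintegral_congr fun τ => ?_
        rw [lintegral_indicator measurableSet_Ioi, setLIntegral_Ioi_comp_sub τ (K · τ)]

/-- Up to the factor `C₀`, a majorant of `BsNorm S T s (S (T σ y))` for `y ∈ D(S)` that, unlike it,
is jointly measurable in `(σ, y)`, as Tonelli's theorem requires. -/
def bsMajorant {E : Type*} [NormedAddCommGroup E] [NormedSpace ℝ E] (S : E → E)
    (T : ℝ → E →L[ℝ] E) (s σ : ℝ) (y : E) : ℝ≥0∞ :=
  ∫⁻ r in Ioi 0, ENNReal.ofReal (r ^ (-s / 2)) *
    ENNReal.ofReal (‖S (T ((r + σ) / 2) y)‖ / ((r + σ) / 2))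

namespace IsBAS

variable {E : Type*} [NormedAddCommGroup E] [NormedSpace ℝ E]
  {D : Set E} {S : E → E} {T : ℝ → E →L[ℝ] E} {M C₀ : ℝ}

theorem T_apply_T (hT : IsBAS D S T M C₀) {a b : ℝ} (ha : 0 ≤ a) (hb : 0 ≤ b) (x : E) :
    T a (T b x) = T (a + b) x := by
  rw [hT.T_semigroup a ha b hb]; rfl

theorem norm_S_T_T_le (hT : IsBAS D S T M C₀) (x : E) {r σ : ℝ} (hr : 0 < r) (hσ : 0 ≤ σ) :
    ‖S (T r (T σ x))‖ ≤ M * ‖S (T r x)‖ := by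
  rw [hT.T_apply_T hr.le hσ, add_comm, ← hT.T_apply_T hσ hr.le,
    hT.T_comm _ (hT.analytic_mem x r hr) σ hσ]
  exact hT.T_bdd σ hσ _

theorem bsNorm_T_le (hT : IsBAS D S T M C₀) (s : ℝ) (x : E) {σ : ℝ} (hσ : 0 ≤ σ) :
    BsNorm S T s (T σ x) ≤ ENNReal.ofReal M * BsNorm S T s x := by
  rw [BsNorm, BsNorm, ← lintegral_const_mul' _ _ ENNReal.ofReal_ne_top]
  refine setLIntegral_mono' measurableSet_Ioi fun r hr => ?_
  rw [← ENNReal.ofReal_mul' (mul_nonneg (Real.rpow_nonneg (le_of_lt hr) _) (norm_nonneg _)),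
    mul_left_comm]
  exact ENNReal.ofReal_le_ofReal
    (mul_le_mul_of_nonneg_left (hT.norm_S_T_T_le x hr hσ) (Real.rpow_nonneg hr.le _))

theorem S_T_S_T (hT : IsBAS D S T M C₀) {x : E} (hx : x ∈ D) {r σ : ℝ} (hr : 0 ≤ r)
    (hσ : 0 ≤ σ) : S (T r (S (T σ x))) = S (T (r + σ) (S x)) := by
  rw [hT.T_comm x hx σ hσ, hT.T_apply_T hr hσ]

theorem norm_S_T_S_T_le (hT : IsBAS D S T M C₀) {x : E} (hx : x ∈ D) {r σ : ℝ} (hr : 0 ≤ r)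
    (hσ : 0 ≤ σ) (hrσ : 0 < r + σ) :
    ‖S (T r (S (T σ x)))‖ ≤ C₀ * (‖S (T ((r + σ) / 2) x)‖ / ((r + σ) / 2)) := by
  have hu : 0 < (r + σ) / 2 := half_pos hrσ
  rw [hT.S_T_S_T hx hr hσ, ← add_halves (r + σ), ← hT.S_T_S_T hx hu.le hu.le, add_halves,
    mul_div_assoc', le_div_iff₀ hu, mul_comm]
  exact hT.analytic_bdd _ _ hu

theorem continuous_S_T (hT : IsBAS D S T M C₀) {t : ℝ} (ht : 0 < t) :
    Continuous fun y => S (T t y) := by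
  let L : E →ₗ[ℝ] E :=
    { toFun := fun y => S (T t y)
      map_add' := fun y z => by
        show S (T t (y + z)) = S (T t y) + S (T t z)
        rw [(T t).map_add]
        exact hT.map_add _ (hT.analytic_mem y t ht) _ (hT.analytic_mem z t ht)
      map_smul' := fun c y => by
        show S (T t (c • y)) = c • S (T t y)
        rw [(T t).map_smul]
        exact hT.map_smul c _ (hT.analytic_mem y t ht) }
  refine (L.mkContinuous (C₀ / t) fun y => ?_).continuous
  rw [div_mul_eq_mul_div, le_div_iff₀ ht, mul_comm]
  exact hT.analytic_bdd y t ht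

theorem continuousOn_S_T (hT : IsBAS D S T M C₀) (y : E) :
    ContinuousOn (fun t => S (T t y)) (Ioi 0) := by
  intro t₀ ht₀
  have hε : 0 < t₀ / 2 := half_pos ht₀
  have hshift : EqOn (fun t => T (t - t₀ / 2) (S (T (t₀ / 2) y))) (fun t => S (T t y))
      (Ioi (t₀ / 2)) := fun t ht => by
    have ht' : 0 ≤ t - t₀ / 2 := sub_nonneg.mpr (le_of_lt ht)
    dsimp only
    rw [← hT.T_comm _ (hT.analytic_mem y _ hε) _ ht', hT.T_apply_T ht' hε.le, sub_add_cancel]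
  have hcont : ContinuousOn (fun t => T (t - t₀ / 2) (S (T (t₀ / 2) y))) (Ioi (t₀ / 2)) :=
    (hT.T_cont _).comp (continuousOn_id.sub continuousOn_const)
      fun t ht => mem_Ici.mpr (sub_nonneg.mpr (le_of_lt ht))
  exact ((hcont.congr hshift.symm).continuousAt
    (Ioi_mem_nhds (half_lt_self ht₀))).continuousWithinAt

theorem measurable_ofReal_norm_S_T_div [MeasurableSpace E] [BorelSpace E]
    (hT : IsBAS D S T M C₀) :
    Measurable fun p : ℝ × E => ENNReal.ofReal (‖S (T p.1 p.2)‖ / p.1) := by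
  -- Carathéodory's criterion needs continuity in time on all of `ℝ`: reparametrize by `exp`.
  have hcar : Measurable (uncurry fun t y => S (T (Real.exp t) y)) :=
    measurable_uncurry_of_continuous_of_measurable
      (fun y => (hT.continuousOn_S_T y).comp_continuous Real.continuous_exp Real.exp_pos)
      (fun t => (hT.continuous_S_T (Real.exp_pos t)).measurable)
  have hlog : Measurable fun p : ℝ × E => ENNReal.ofReal
      (‖S (T (Real.exp (Real.log p.1)) p.2)‖ / p.1) :=
    ENNReal.measurable_ofReal.comp ((hcar.comp
      ((Real.measurable_log.comp measurable_fst).prodMk measurable_snd)).norm.div measurable_fst)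
  have heq : (fun p : ℝ × E => ENNReal.ofReal (‖S (T p.1 p.2)‖ / p.1)) = fun p =>
      if 0 < p.1 then ENNReal.ofReal (‖S (T (Real.exp (Real.log p.1)) p.2)‖ / p.1) else 0 := by
    funext p
    split_ifs with hp
    · rw [Real.exp_log hp]
    · exact ENNReal.ofReal_eq_zero.mpr
        (div_nonpos_of_nonneg_of_nonpos (norm_nonneg _) (not_lt.mp hp))
  rw [heq]
  exact Measurable.ite (measurableSet_lt measurable_const measurable_fst) hlog measurable_const

theorem bsNorm_S_T_le_bsMajorant (hT : IsBAS D S T M C₀) (s : ℝ) {y : E} (hy : y ∈ D)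
    {σ : ℝ} (hσ : 0 < σ) :
    BsNorm S T s (S (T σ y)) ≤ ENNReal.ofReal C₀ * bsMajorant S T s σ y := by
  rw [BsNorm, bsMajorant, ← lintegral_const_mul' _ _ ENNReal.ofReal_ne_top]
  refine setLIntegral_mono' measurableSet_Ioi fun r hr => ?_
  have hrσ : 0 < r + σ := add_pos hr hσ
  rw [mul_left_comm, ← ENNReal.ofReal_mul' (div_nonneg (norm_nonneg _) (half_pos hrσ).le),
    ← ENNReal.ofReal_mul (Real.rpow_nonneg (le_of_lt hr) _)]
  exact ENNReal.ofReal_le_ofReal (mul_le_mul_of_nonneg_left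
    (hT.norm_S_T_S_T_le hy (le_of_lt hr) hσ.le hrσ) (Real.rpow_nonneg (le_of_lt hr) _))

theorem measurable_bsMajorant [MeasurableSpace E] [BorelSpace E] (hT : IsBAS D S T M C₀)
    (s : ℝ) : Measurable (uncurry (bsMajorant S T s)) := by
  have hF : Measurable fun q : (ℝ × E) × ℝ => ENNReal.ofReal (q.2 ^ (-s / 2)) *
      ENNReal.ofReal (‖S (T ((q.2 + q.1.1) / 2) q.1.2)‖ / ((q.2 + q.1.1) / 2)) :=
    (ENNReal.measurable_ofReal.comp (measurable_snd.pow_const _)).mul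
    (hT.measurable_ofReal_norm_S_T_div.comp
      (((measurable_snd.add (measurable_fst.comp measurable_fst)).div_const 2).prodMk
        (measurable_snd.comp measurable_fst)))
  exact hF.lintegral_prod_right'

theorem lintegral_bsMajorant (hT : IsBAS D S T M C₀) {s : ℝ} (hs : s < 2) (y : E) :
    ∫⁻ σ in Ioi 0, bsMajorant S T s σ y
      = 2 * ENNReal.ofReal (2 ^ (1 - s / 2) / (1 - s / 2)) * BsNorm S T s y := by
  borelize E
  have hs' : 0 < 1 - s / 2 := by linarith
  have hQ : Measurable fun u => ENNReal.ofReal (‖S (T u y)‖ / u) :=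
    hT.measurable_ofReal_norm_S_T_div.comp (measurable_id.prodMk measurable_const)
  simp only [bsMajorant]
  rw [setLIntegral_Ioi_Ioi_comp_add_div_two (F := fun r u =>
      ENNReal.ofReal (r ^ (-s / 2)) * ENNReal.ofReal (‖S (T u y)‖ / u))
      ((ENNReal.measurable_ofReal.comp (measurable_fst.pow_const _)).mul
        (hQ.comp measurable_snd)),
    mul_assoc, BsNorm, ← lintegral_const_mul' _ _ ENNReal.ofReal_ne_top]
  congr 1
  refine setLIntegral_congr_fun measurableSet_Ioi fun u hu => ?_
  have hu : 0 < u := hu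
  rw [lintegral_mul_const' _ _ ENNReal.ofReal_ne_top,
    setLIntegral_Ioo_rpow (by linarith) (by positivity : (0 : ℝ) < 2 * u),
    show -s / 2 + 1 = 1 - s / 2 by ring,
    ← ENNReal.ofReal_mul (div_nonneg (by positivity) hs'.le),
    ← ENNReal.ofReal_mul (div_nonneg (by positivity) hs'.le)]
  congr 1
  rw [Real.mul_rpow zero_le_two hu.le,
    show -s / 2 = (1 - s / 2) - 1 by ring, Real.rpow_sub_one hu.ne']
  field_simp

theorem setLIntegral_lintegral_bsNorm_S_T_le (hT : IsBAS D S T M C₀) {s : ℝ} (hs : s < 2)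
    {A : Set ℝ} (hA : MeasurableSet A) (hsub : ∀ t ∈ A, Ioo 0 t ⊆ A) {f : ℝ → E}
    (hf : AEStronglyMeasurable f (volume.restrict A)) (hfD : ∀ᵐ τ ∂volume.restrict A, f τ ∈ D) :
    ∫⁻ t in A, ∫⁻ τ in Ioo 0 t, BsNorm S T s (S (T (t - τ) (f τ)))
      ≤ ENNReal.ofReal C₀ * (2 * ENNReal.ofReal (2 ^ (1 - s / 2) / (1 - s / 2)))
          * ∫⁻ τ in A, BsNorm S T s (f τ) := by
  borelize E
  have hfg : f =ᵐ[volume.restrict A] hf.mk f := hf.ae_eq_mk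
  have hg : Measurable fun p : ℝ × ℝ => (p.1, hf.mk f p.2) :=
    measurable_fst.prodMk (hf.stronglyMeasurable_mk.measurable.comp measurable_snd)
  have hK : Measurable (uncurry fun σ τ => ENNReal.ofReal C₀ * bsMajorant S T s σ (hf.mk f τ)) :=
    ((hT.measurable_bsMajorant s).comp hg).const_mul _
  calc ∫⁻ t in A, ∫⁻ τ in Ioo 0 t, BsNorm S T s (S (T (t - τ) (f τ)))
      ≤ ∫⁻ t in A, ∫⁻ τ in Ioo 0 t, ENNReal.ofReal C₀ * bsMajorant S T s (t - τ) (hf.mk f τ) := by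
        refine setLIntegral_mono' hA fun t ht => lintegral_mono_ae ?_
        filter_upwards [ae_restrict_of_ae_restrict_of_subset (hsub t ht) (hfD.and hfg),
          ae_restrict_mem measurableSet_Ioo] with τ hτ hτt
        rw [← hτ.2]
        exact hT.bsNorm_S_T_le_bsMajorant s hτ.1 (sub_pos.mpr hτt.2)
    _ ≤ ∫⁻ τ in A, ∫⁻ σ in Ioi 0, ENNReal.ofReal C₀ * bsMajorant S T s σ (hf.mk f τ) :=
        setLIntegral_lintegral_Ioo_sub_le hA hsub hK
    _ = ∫⁻ τ in A, ENNReal.ofReal C₀ * (2 * ENNReal.ofReal (2 ^ (1 - s / 2) / (1 - s / 2)))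
          * BsNorm S T s (f τ) := by
        refine lintegral_congr_ae (hfg.mono fun τ hτ => ?_)
        dsimp only
        rw [lintegral_const_mul' _ _ ENNReal.ofReal_ne_top, hT.lintegral_bsMajorant hs, hτ,
          mul_assoc (ENNReal.ofReal C₀)]
    _ = _ := lintegral_const_mul' _ _ (by finiteness)

theorem setLIntegral_bsNorm_T_le (hT : IsBAS D S T M C₀) (s : ℝ) {t : ℝ} {A : Set ℝ}
    (hsub : Ioo 0 t ⊆ A) (f : ℝ → E) :
    ∫⁻ τ in Ioo 0 t, BsNorm S T s (T (t - τ) (f τ))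
      ≤ ENNReal.ofReal M * ∫⁻ τ in A, BsNorm S T s (f τ) :=
  calc ∫⁻ τ in Ioo 0 t, BsNorm S T s (T (t - τ) (f τ))
      ≤ ∫⁻ τ in Ioo 0 t, ENNReal.ofReal M * BsNorm S T s (f τ) :=
        setLIntegral_mono' measurableSet_Ioo fun τ hτ =>
          hT.bsNorm_T_le s (f τ) (sub_nonneg.mpr hτ.2.le)
    _ = ENNReal.ofReal M * ∫⁻ τ in Ioo 0 t, BsNorm S T s (f τ) :=
        lintegral_const_mul' _ _ ENNReal.ofReal_ne_top
    _ ≤ ENNReal.ofReal M * ∫⁻ τ in A, BsNorm S T s (f τ) := by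
        gcongr

end IsBAS

theorem maximal_L1_regularity_Bs_general (s : ℝ) (hs2 : s < 2) (M C₀ : ℝ) :
    ∃ C : ℝ≥0, ∀ T₀ : ℝ≥0∞, 0 < T₀ →
      ∀ (D : Set X) (S : X → X) (T : ℝ → X →L[ℝ] X), IsBAS D S T M C₀ →
      ∀ f : ℝ → X,
        AEStronglyMeasurable f
          (volume.restrict {τ : ℝ | 0 < τ ∧ ENNReal.ofReal τ < T₀}) →
        (∀ᵐ τ ∂volume.restrict {τ : ℝ | 0 < τ ∧ ENNReal.ofReal τ < T₀}, f τ ∈ D) →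
        (∫⁻ τ in {τ : ℝ | 0 < τ ∧ ENNReal.ofReal τ < T₀}, BsNorm S T s (f τ)) ≠ ⊤ →
        (∫⁻ t in {τ : ℝ | 0 < τ ∧ ENNReal.ofReal τ < T₀},
            ∫⁻ τ in Set.Ioo 0 t, BsNorm S T s (S (T (t - τ) (f τ))))
          ≤ C * ∫⁻ τ in {τ : ℝ | 0 < τ ∧ ENNReal.ofReal τ < T₀},
              BsNorm S T s (f τ) ∧
        ∀ t : ℝ, 0 < t → ENNReal.ofReal t < T₀ →
          (∫⁻ τ in Set.Ioo 0 t, BsNorm S T s (T (t - τ) (f τ)))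
            ≤ C * ∫⁻ τ in {τ : ℝ | 0 < τ ∧ ENNReal.ofReal τ < T₀},
                BsNorm S T s (f τ) := by
  refine ⟨M.toNNReal + C₀.toNNReal * (2 * (2 ^ (1 - s / 2) / (1 - s / 2)).toNNReal), ?_⟩
  intro T₀ _ D S T hT f hf hfD _
  set A := {τ : ℝ | 0 < τ ∧ ENNReal.ofReal τ < T₀}
  have hA : MeasurableSet A := measurableSet_Ioi.inter (ENNReal.measurable_ofReal measurableSet_Iio)
  have hsub : ∀ t ∈ A, Ioo 0 t ⊆ A := fun t ht τ hτ =>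
    ⟨hτ.1, (ENNReal.ofReal_le_ofReal hτ.2.le).trans_lt ht.2⟩
  have hC : ((M.toNNReal + C₀.toNNReal * (2 * (2 ^ (1 - s / 2) / (1 - s / 2)).toNNReal) : ℝ≥0)
      : ℝ≥0∞) = ENNReal.ofReal M
        + ENNReal.ofReal C₀ * (2 * ENNReal.ofReal (2 ^ (1 - s / 2) / (1 - s / 2))) := by
    simp only [ENNReal.coe_add, ENNReal.coe_mul, ENNReal.coe_ofNat]
    rfl
  rw [hC]
  exact ⟨(hT.setLIntegral_lintegral_bsNorm_S_T_le hs2 hA hsub hf hfD).trans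
      (mul_le_mul_left le_add_self _),
    fun t ht0 htT => (hT.setLIntegral_bsNorm_T_le s (hsub t ⟨ht0, htT⟩) f).trans
      (mul_le_mul_left le_self_add _)⟩

/-- Maximal `L¹` regularity bound in `Ḃˢ` for the Duhamel (inhomogeneous) part:
for `s ∈ (0,2)` and `T₀ ∈ (0,∞]` there is `C = C(s,M,C₀)` such that for every
strongly measurable `f : (0,T₀) → X` taking values in `D(S)` a.e. with
`∫₀^{T₀}‖f(τ)‖_{Ḃˢ}dτ < ∞`:
`∫₀^{T₀}∫₀^t ‖S(T(t−τ)f(τ))‖_{Ḃˢ} dτ dt ≤ C∫₀^{T₀}‖f(τ)‖_{Ḃˢ}dτ` and, for every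
`t ∈ (0,T₀)`, `∫₀^t ‖T(t−τ)f(τ)‖_{Ḃˢ} dτ ≤ C∫₀^{T₀}‖f(τ)‖_{Ḃˢ}dτ`. -/
theorem maximal_L1_regularity_Bs (s : ℝ) (hs0 : 0 < s) (hs2 : s < 2) (M C₀ : ℝ) :
    ∃ C : ℝ≥0, ∀ T₀ : ℝ≥0∞, 0 < T₀ →
      ∀ (D : Set X) (S : X → X) (T : ℝ → X →L[ℝ] X), IsBAS D S T M C₀ →
      ∀ f : ℝ → X,
        AEStronglyMeasurable f
          (volume.restrict {τ : ℝ | 0 < τ ∧ ENNReal.ofReal τ < T₀}) →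
        (∀ᵐ τ ∂volume.restrict {τ : ℝ | 0 < τ ∧ ENNReal.ofReal τ < T₀}, f τ ∈ D) →
        (∫⁻ τ in {τ : ℝ | 0 < τ ∧ ENNReal.ofReal τ < T₀}, BsNorm S T s (f τ)) ≠ ⊤ →
        (∫⁻ t in {τ : ℝ | 0 < τ ∧ ENNReal.ofReal τ < T₀},
            ∫⁻ τ in Set.Ioo 0 t, BsNorm S T s (S (T (t - τ) (f τ))))
          ≤ C * ∫⁻ τ in {τ : ℝ | 0 < τ ∧ ENNReal.ofReal τ < T₀},
              BsNorm S T s (f τ) ∧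
        ∀ t : ℝ, 0 < t → ENNReal.ofReal t < T₀ →
          (∫⁻ τ in Set.Ioo 0 t, BsNorm S T s (T (t - τ) (f τ)))
            ≤ C * ∫⁻ τ in {τ : ℝ | 0 < τ ∧ ENNReal.ofReal τ < T₀},
                BsNorm S T s (f τ) :=
  maximal_L1_regularity_Bs_general s hs2 M C₀
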